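/- For all integers t ≥ 4 and s ≥ 3, the odd Hadwiger number of the direct product of complete graphs satisfies oh(K_t × K_s) ≥ t · ⌊s/3⌋. -/

import Mathlib

open SimpleGraph

/-- `H` is an odd minor of `G`: there are pairwise vertex-disjoint subtrees of `G`, one for
each vertex of `H`, and a 2-colouring of the vertices which is proper on each tree, such that
for every edge of `H` there is a monochromatic edge of `G` between the corresponding trees. -/
def IsOddMinorOf {W V : Type*} (H : SimpleGraph W) (G : SimpleGraph V) : Prop :=
  ∃ (T : W → G.Subgraph) (c : V → Fin 2),
    (∀ w, (T w).coe.IsTree) ∧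
    (Pairwise fun w w' => Disjoint (T w).verts (T w').verts) ∧
    (∀ w, ∀ x y, (T w).Adj x y → c x ≠ c y) ∧
    (∀ w w', H.Adj w w' →
      ∃ x y, x ∈ (T w).verts ∧ y ∈ (T w').verts ∧ G.Adj x y ∧ c x = c y)

/-- The odd Hadwiger number of `G`: the largest `r` such that `K_r` is an odd minor of `G`. -/
noncomputable def oddHadwiger {V : Type*} [Fintype V] (G : SimpleGraph V) : ℕ :=
  sSup {r : ℕ | IsOddMinorOf (⊤ : SimpleGraph (Fin r)) G}

/-- The Cartesian product `G □ H`. -/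
def cartProd {α β : Type*} (G : SimpleGraph α) (H : SimpleGraph β) : SimpleGraph (α × β) where
  Adj x y := (x.1 = y.1 ∧ H.Adj x.2 y.2) ∨ (x.2 = y.2 ∧ G.Adj x.1 y.1)
  symm := by
    constructor
    rintro x y (⟨h1, h2⟩ | ⟨h1, h2⟩)
    · exact Or.inl ⟨h1.symm, h2.symm⟩
    · exact Or.inr ⟨h1.symm, h2.symm⟩
  loopless := by
    constructor
    rintro x (⟨_, h⟩ | ⟨_, h⟩)
    · exact H.irrefl h
    · exact G.irrefl h

/-- The strong product `G ⊠ H`. -/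
def strongProd {α β : Type*} (G : SimpleGraph α) (H : SimpleGraph β) : SimpleGraph (α × β) where
  Adj x y := (x.1 = y.1 ∧ H.Adj x.2 y.2) ∨ (x.2 = y.2 ∧ G.Adj x.1 y.1) ∨
    (G.Adj x.1 y.1 ∧ H.Adj x.2 y.2)
  symm := by
    constructor
    rintro x y (⟨h1, h2⟩ | ⟨h1, h2⟩ | ⟨h1, h2⟩)
    · exact Or.inl ⟨h1.symm, h2.symm⟩
    · exact Or.inr (Or.inl ⟨h1.symm, h2.symm⟩)
    · exact Or.inr (Or.inr ⟨h1.symm, h2.symm⟩)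
  loopless := by
    constructor
    rintro x (⟨_, h⟩ | ⟨_, h⟩ | ⟨h, _⟩)
    · exact H.irrefl h
    · exact G.irrefl h
    · exact G.irrefl h

/-- The lexicographic product `G ∘ H`. -/
def lexProd {α β : Type*} (G : SimpleGraph α) (H : SimpleGraph β) : SimpleGraph (α × β) where
  Adj x y := G.Adj x.1 y.1 ∨ (x.1 = y.1 ∧ H.Adj x.2 y.2)
  symm := by
    constructor
    rintro x y (h | ⟨h1, h2⟩)
    · exact Or.inl h.symm
    · exact Or.inr ⟨h1.symm, h2.symm⟩
  loopless := by
    constructor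
    rintro x (h | ⟨_, h⟩)
    · exact G.irrefl h
    · exact H.irrefl h

/-- The direct (tensor) product `G × H`. -/
def dirProd {α β : Type*} (G : SimpleGraph α) (H : SimpleGraph β) : SimpleGraph (α × β) where
  Adj x y := G.Adj x.1 y.1 ∧ H.Adj x.2 y.2
  symm := by
    constructor
    rintro x y ⟨h1, h2⟩
    exact ⟨h1.symm, h2.symm⟩
  loopless := by
    constructor
    rintro x ⟨h, _⟩
    exact G.irrefl h

/-!
For `(i, j) ∈ Fin t × Fin ⌊s/3⌋` take the path `(i, 3j) — (i+2, 3j+1) — (i+1, 3j+2)`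
(first coordinate mod `t`), coloured by whether the second coordinate is `≡ 1 mod 3`, so its ends
have colour `0`. The second coordinate determines `j` and the position on the path, so the paths
are disjoint. Two paths `(i, j)`, `(i', j')` are joined by the monochromatic edge
`(i, 3j) — (i'+1, 3j'+2)` unless `i = i'+1`, and then by `(i+1, 3j+2) — (i', 3j')`, because
`i'+2 ≠ i'` once `t ≥ 3`.
-/

namespace SimpleGraph

variable {V : Type*} {G : SimpleGraph V}

theorem isTree_coe_subgraphOfAdj_sup {a b c : V} (hab : G.Adj a b) (hbc : G.Adj b c) :
    (G.subgraphOfAdj hab ⊔ G.subgraphOfAdj hbc).coe.IsTree := by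
  have hb : b ∈ (G.subgraphOfAdj hab ⊔ G.subgraphOfAdj hbc).verts := by simp
  convert isTree_starGraph (⟨b, hb⟩ : (G.subgraphOfAdj hab ⊔ G.subgraphOfAdj hbc).verts)
  ext ⟨x, hx⟩ ⟨y, hy⟩
  simp only [Subgraph.verts_sup, subgraphOfAdj_verts, Set.mem_union, Set.mem_insert_iff,
    Set.mem_singleton_iff] at hx hy
  simp only [Subgraph.coe_adj, Subgraph.sup_adj, subgraphOfAdj_adj, Sym2.eq_iff, starGraph_adj,
    ne_eq, Subtype.mk.injEq]
  have := hab.ne; have := hbc.ne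
  aesop

end SimpleGraph

theorem finRotate_finRotate_ne {n : ℕ} (hn : 3 ≤ n) (i : Fin n) :
    finRotate n (finRotate n i) ≠ i := by
  have : NeZero n := ⟨by omega⟩
  rw [finRotate_apply, finRotate_apply, add_assoc, Ne, add_eq_left, Fin.ext_iff,
    Fin.val_add, Fin.val_one', Fin.val_zero, Nat.one_mod_eq_one.mpr (by omega),
    Nat.mod_eq_of_lt (by omega)]
  omega

section OddMinor

variable {V W W' : Type*} {G : SimpleGraph V} {H : SimpleGraph W} {H' : SimpleGraph W'}

theorem IsOddMinorOf.embedding (f : H' ↪g H) (h : IsOddMinorOf H G) : IsOddMinorOf H' G := by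
  obtain ⟨T, c, htree, hdisj, hproper, hedge⟩ := h
  exact ⟨T ∘ f, c, fun w => htree (f w), fun w w' hne => hdisj (f.injective.ne hne),
    fun w => hproper (f w), fun w w' hww' => hedge (f w) (f w') (f.map_rel_iff.mpr hww')⟩

theorem IsOddMinorOf.card_le [Finite V] (h : IsOddMinorOf H G) : Nat.card W ≤ Nat.card V := by
  obtain ⟨T, -, htree, hdisj, -, -⟩ := h
  have hne : ∀ w, (T w).verts.Nonempty := fun w => by
    obtain ⟨⟨x, hx⟩⟩ := (htree w).connected.nonempty
    exact ⟨x, hx⟩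
  choose f hf using hne
  refine Nat.card_le_card_of_injective f fun w w' hfw => ?_
  by_contra hne
  exact Set.disjoint_left.mp (hdisj hne) (hf w) (hfw ▸ hf w')

theorem le_oddHadwiger [Fintype V] {r : ℕ} (h : IsOddMinorOf (⊤ : SimpleGraph (Fin r)) G) :
    r ≤ oddHadwiger G :=
  le_csSup ⟨Nat.card V, fun r' hr' => by simpa using hr'.card_le⟩ h

end OddMinor

section Construction

variable {α β γ : Type*}

theorem dirProd_top_adj {x y : α × β} :
    (dirProd (⊤ : SimpleGraph α) (⊤ : SimpleGraph β)).Adj x y ↔ x.1 ≠ y.1 ∧ x.2 ≠ y.2 :=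
  Iff.rfl

theorem isOddMinorOf_top_dirProd_top (σ : α → α) (hσ : σ.Injective) (hσσ : ∀ a, σ (σ a) ≠ a)
    (e : γ × Fin 3 ↪ β) :
    IsOddMinorOf (⊤ : SimpleGraph (α × γ)) (dirProd (⊤ : SimpleGraph α) (⊤ : SimpleGraph β)) := by
  classical
  have hσ_ne : ∀ a, σ a ≠ a := fun a h => hσσ a (by rw [h, h])
  have he : ∀ {j j' k k'}, e (j, k) = e (j', k') ↔ j = j' ∧ k = k' := by
    simp [e.injective.eq_iff]
  have hab : ∀ p : α × γ, (dirProd ⊤ ⊤).Adj (p.1, e (p.2, 0)) (σ (σ p.1), e (p.2, 1)) :=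
    fun p => dirProd_top_adj.mpr ⟨(hσσ p.1).symm, by simp [he]⟩
  have hbc : ∀ p : α × γ, (dirProd ⊤ ⊤).Adj (σ (σ p.1), e (p.2, 1)) (σ p.1, e (p.2, 2)) :=
    fun p => dirProd_top_adj.mpr ⟨hσ.ne (hσ_ne p.1), by simp [he]⟩
  set c : α × β → Fin 2 := fun x => if ∃ j, x.2 = e (j, 1) then 1 else 0 with hc_def
  have hc : ∀ a j k, c (a, e (j, k)) = if k = 1 then 1 else 0 := by
    intro a j k; simp [hc_def, he]
  refine ⟨fun p => (dirProd ⊤ ⊤).subgraphOfAdj (hab p) ⊔ (dirProd ⊤ ⊤).subgraphOfAdj (hbc p), c,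
    fun p => isTree_coe_subgraphOfAdj_sup (hab p) (hbc p), ?_, ?_, ?_⟩
  · intro p p' hpp'
    rw [Set.disjoint_left]
    rintro ⟨x₁, x₂⟩ hx hx'
    simp only [Subgraph.verts_sup, subgraphOfAdj_verts, Set.mem_union, Set.mem_insert_iff,
      Set.mem_singleton_iff, Prod.mk.injEq] at hx hx'
    apply hpp'
    rcases hx with (⟨rfl, rfl⟩ | ⟨rfl, rfl⟩) | (⟨rfl, rfl⟩ | ⟨rfl, rfl⟩) <;>
      rcases hx' with (⟨h₁, h₂⟩ | ⟨h₁, h₂⟩) | (⟨h₁, h₂⟩ | ⟨h₁, h₂⟩) <;>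
      simp only [he, hσ.eq_iff] at h₁ h₂ <;> simp_all [Prod.ext_iff]
  · intro p x y hxy
    simp only [Subgraph.sup_adj, subgraphOfAdj_adj, Sym2.eq_iff] at hxy
    rcases hxy with (⟨rfl, rfl⟩ | ⟨rfl, rfl⟩) | (⟨rfl, rfl⟩ | ⟨rfl, rfl⟩) <;> simp [hc]
  · intro p p' _
    by_cases h : p.1 = σ p'.1
    · refine ⟨(σ p.1, e (p.2, 2)), (p'.1, e (p'.2, 0)), by simp, by simp, ?_, by simp [hc]⟩
      exact dirProd_top_adj.mpr ⟨fun h' => hσσ p'.1 (h ▸ h'), by simp [he]⟩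
    · exact ⟨(p.1, e (p.2, 0)), (σ p'.1, e (p'.2, 2)), by simp, by simp,
        dirProd_top_adj.mpr ⟨h, by simp [he]⟩, by simp [hc]⟩

end Construction

theorem stmt_12_general (t s : ℕ) (ht : 4 ≤ t) :
    oddHadwiger (dirProd (⊤ : SimpleGraph (Fin t)) (⊤ : SimpleGraph (Fin s))) ≥ t * (s / 3) := by
  let blocks : Fin (s / 3) × Fin 3 ↪ Fin s :=
    finProdFinEquiv.toEmbedding.trans (Fin.castLEEmb (Nat.div_mul_le_self s 3))
  have hminor := isOddMinorOf_top_dirProd_top (finRotate t) (finRotate t).injective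
    (finRotate_finRotate_ne (by omega)) blocks
  exact le_oddHadwiger (hminor.embedding (Embedding.completeGraph finProdFinEquiv.symm.toEmbedding))

theorem stmt_12 (t s : ℕ) (ht : 4 ≤ t) (hs : 3 ≤ s) :
    oddHadwiger (dirProd (⊤ : SimpleGraph (Fin t)) (⊤ : SimpleGraph (Fin s))) ≥ t * (s / 3) :=
  stmt_12_general t s ht
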